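/- Under conditions (2), for every k ≥ 3 and every z ∈ ℂ with |z| = r_k one has |h(z)| · r_k^{n_{k−1}} ≤ n_k; in particular, if h(z) ≠ 0, then the displacement of the Newton map satisfies (1/|h(z)|) · (n_k / (4π)) ≥ r_k^{n_{k−1}} / (4π). -/

import Mathlib

/-!
On `|z| = r_k` the factors with `j < k` have modulus at most `2 r_k ^ n_j`, the `k`-th
factor has modulus at most `2`, and since `r_j ≥ 2 ^ (j - k) r_k` the factors with `j > k`
have modulus at most `1 + 2 ^ (k - j)`, whose product is below `e < 3`. Hence
`|h z| ≤ 3 · 2 ^ k · r_k ^ (2 n_{k-1})` by `n_1 + ⋯ + n_{k-1} ≤ 2 n_{k-1}`, and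
`3 · 2 ^ k ≤ r_k ^ n_{k-1}` because `n_{k-1} ≥ 16`; so
`|h z| · r_k ^ n_{k-1} ≤ r_k ^ (4 n_{k-1}) ≤ n_k`.
-/

open Filter Finset

section Doubling

variable {r : ℕ → ℝ}

theorem two_pow_mul_le_of_doubling (hr : ∀ k, 2 ≤ k → 2 * r (k - 1) ≤ r k) {i j : ℕ}
    (hi : 1 ≤ i) (hij : i ≤ j) : 2 ^ (j - i) * r i ≤ r j := by
  induction j, hij using Nat.le_induction with
  | base => simp
  | succ j hij ih =>
    calc (2 : ℝ) ^ (j + 1 - i) * r i = 2 * (2 ^ (j - i) * r i) := by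
          rw [Nat.sub_add_comm hij, pow_succ]; ring
      _ ≤ 2 * r j := by gcongr
      _ ≤ r (j + 1) := hr (j + 1) (by omega)

theorem two_pow_le_of_doubling (hr1 : 1 ≤ r 1) (hr : ∀ k, 2 ≤ k → 2 * r (k - 1) ≤ r k)
    {j : ℕ} (hj : 1 ≤ j) : 2 ^ (j - 1) ≤ r j :=
  calc (2 : ℝ) ^ (j - 1) ≤ 2 ^ (j - 1) * r 1 := le_mul_of_one_le_right (by positivity) hr1
    _ ≤ r j := two_pow_mul_le_of_doubling hr le_rfl hj

theorem one_le_of_doubling (hr1 : 1 ≤ r 1) (hr : ∀ k, 2 ≤ k → 2 * r (k - 1) ≤ r k)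
    {j : ℕ} (hj : 1 ≤ j) : 1 ≤ r j :=
  (one_le_pow₀ one_le_two).trans (two_pow_le_of_doubling hr1 hr hj)

theorem le_of_doubling (hr1 : 1 ≤ r 1) (hr : ∀ k, 2 ≤ k → 2 * r (k - 1) ≤ r k)
    {i j : ℕ} (hi : 1 ≤ i) (hij : i ≤ j) : r i ≤ r j :=
  (le_mul_of_one_le_left (zero_le_one.trans (one_le_of_doubling hr1 hr hi))
    (one_le_pow₀ one_le_two)).trans (two_pow_mul_le_of_doubling hr hi hij)

theorem div_le_half_pow_of_doubling (hr1 : 1 ≤ r 1) (hr : ∀ k, 2 ≤ k → 2 * r (k - 1) ≤ r k)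
    {i j : ℕ} (hi : 1 ≤ i) (hij : i ≤ j) : r i / r j ≤ (1 / 2) ^ (j - i) := by
  have hrj : 0 < r j := zero_lt_one.trans_le (one_le_of_doubling hr1 hr (hi.trans hij))
  rw [div_le_iff₀ hrj, one_div_pow, div_mul_eq_mul_div, le_div_iff₀ (by positivity), mul_comm]
  simpa using two_pow_mul_le_of_doubling hr hi hij

end Doubling

theorem sum_Ioc_half_pow_eq {k m : ℕ} (hkm : k ≤ m) :
    ∑ j ∈ Ioc k m, (1 / 2 : ℝ) ^ (j - k) = 1 - (1 / 2) ^ (m - k) := by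
  induction m, hkm using Nat.le_induction with
  | base => simp
  | succ m hkm ih =>
    rw [sum_Ioc_succ_top hkm, ih, Nat.sub_add_comm hkm, pow_succ]
    ring

theorem prod_Ioc_one_add_half_pow_lt_three (k m : ℕ) :
    ∏ j ∈ Ioc k m, (1 + (1 / 2 : ℝ) ^ (j - k)) < 3 := by
  have hsum : ∑ j ∈ Ioc k m, (1 / 2 : ℝ) ^ (j - k) ≤ 1 := by
    rcases le_total k m with hkm | hmk
    · rw [sum_Ioc_half_pow_eq hkm]
      linarith [pow_nonneg (by norm_num : (0 : ℝ) ≤ 1 / 2) (m - k)]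
    · simp [Ioc_eq_empty_of_le hmk]
  calc ∏ j ∈ Ioc k m, (1 + (1 / 2 : ℝ) ^ (j - k))
      ≤ Real.exp (∑ j ∈ Ioc k m, (1 / 2 : ℝ) ^ (j - k)) :=
        Real.prod_one_add_le_exp_sum _ fun _ ↦ by positivity
    _ ≤ Real.exp 1 := Real.exp_le_exp.2 hsum
    _ < 3 := Real.exp_one_lt_d9.trans (by norm_num)

theorem one_add_pow_le_two_mul_pow {x y : ℝ} (hx : 1 ≤ x) (hxy : x ≤ y) (n : ℕ) :
    1 + x ^ n ≤ 2 * y ^ n := by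
  have h1 : 1 ≤ x ^ n := one_le_pow₀ hx
  have h2 : x ^ n ≤ y ^ n := pow_le_pow_left₀ (by linarith) hxy n
  linarith

theorem norm_prod_one_add_div_pow_le {ι : Type*} (s : Finset ι) (z : ℂ) {r : ι → ℝ}
    (hr : ∀ j ∈ s, 0 ≤ r j) (n : ι → ℕ) :
    ‖∏ j ∈ s, (1 + (z / r j) ^ n j)‖ ≤ ∏ j ∈ s, (1 + (‖z‖ / r j) ^ n j) := by
  rw [norm_prod]
  refine prod_le_prod (fun _ _ ↦ norm_nonneg _) fun j hj ↦ (norm_add_le _ _).trans ?_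
  rw [norm_one, norm_pow, norm_div, Complex.norm_real, Real.norm_of_nonneg (hr j hj)]

section Product

variable {r : ℕ → ℝ} {n : ℕ → ℕ}

theorem prod_Icc_one_add_div_pow_le (hr1 : 1 ≤ r 1) (hr : ∀ k, 2 ≤ k → 2 * r (k - 1) ≤ r k)
    {k i : ℕ} (hki : k ≤ i) :
    ∏ j ∈ Icc 1 k, (1 + (r i / r j) ^ n j) ≤ 2 ^ k * r i ^ ∑ j ∈ Icc 1 k, n j := by
  have hratio : ∀ j ∈ Icc 1 k, 1 ≤ r i / r j ∧ r i / r j ≤ r i := fun j hj ↦ by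
    obtain ⟨hj1, hjk⟩ := mem_Icc.1 hj
    have hrj : 1 ≤ r j := one_le_of_doubling hr1 hr hj1
    have hji : r j ≤ r i := le_of_doubling hr1 hr hj1 (hjk.trans hki)
    exact ⟨(one_le_div (zero_lt_one.trans_le hrj)).2 hji,
      div_le_self (zero_le_one.trans (hrj.trans hji)) hrj⟩
  calc ∏ j ∈ Icc 1 k, (1 + (r i / r j) ^ n j) ≤ ∏ j ∈ Icc 1 k, 2 * r i ^ n j :=
        prod_le_prod (fun j hj ↦ add_nonneg zero_le_one
            (pow_nonneg (zero_le_one.trans (hratio j hj).1) _))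
          fun j hj ↦ one_add_pow_le_two_mul_pow (hratio j hj).1 (hratio j hj).2 _
    _ = 2 ^ k * r i ^ ∑ j ∈ Icc 1 k, n j := by
        rw [prod_mul_distrib, prod_const, Nat.card_Icc, prod_pow_eq_pow_sum,
          Nat.add_sub_cancel]

theorem prod_Ioc_one_add_div_pow_lt_three (hr1 : 1 ≤ r 1)
    (hr : ∀ k, 2 ≤ k → 2 * r (k - 1) ≤ r k) (hn : ∀ k, 1 ≤ k → 1 ≤ n k) {i : ℕ} (hi : 1 ≤ i)
    (m : ℕ) : ∏ j ∈ Ioc i m, (1 + (r i / r j) ^ n j) < 3 := by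
  have hratio : ∀ j ∈ Ioc i m, 0 ≤ r i / r j ∧ r i / r j ≤ (1 / 2) ^ (j - i) := fun j hj ↦ by
    have hij : i ≤ j := (mem_Ioc.1 hj).1.le
    exact ⟨div_nonneg (zero_le_one.trans (one_le_of_doubling hr1 hr hi))
      (zero_le_one.trans (one_le_of_doubling hr1 hr (hi.trans hij))),
      div_le_half_pow_of_doubling hr1 hr hi hij⟩
  refine (prod_le_prod (fun j hj ↦ add_nonneg zero_le_one (pow_nonneg (hratio j hj).1 _))
    fun j hj ↦ ?_).trans_lt (prod_Ioc_one_add_half_pow_lt_three i m)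
  obtain ⟨hratio_nonneg, hratio_le⟩ := hratio j hj
  have hnj : n j ≠ 0 := Nat.one_le_iff_ne_zero.1 (hn j (hi.trans (mem_Ioc.1 hj).1.le))
  have := pow_le_of_le_one hratio_nonneg
    (hratio_le.trans (pow_le_one₀ (by norm_num) (by norm_num))) hnj
  linarith

theorem norm_prod_Icc_one_add_div_pow_le (hr1 : 1 ≤ r 1)
    (hr : ∀ k, 2 ≤ k → 2 * r (k - 1) ≤ r k) (hn : ∀ k, 1 ≤ k → 1 ≤ n k) {k m : ℕ}
    (hkm : k + 1 ≤ m) {z : ℂ} (hz : ‖z‖ = r (k + 1)) :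
    ‖∏ j ∈ Icc 1 m, (1 + (z / r j) ^ n j)‖ ≤
      3 * 2 ^ (k + 1) * r (k + 1) ^ ∑ j ∈ Icc 1 k, n j := by
  set F : ℕ → ℝ := fun j ↦ 1 + (r (k + 1) / r j) ^ n j
  have hsplit : ∏ j ∈ Icc 1 m, F j =
      (∏ j ∈ Icc 1 k, F j) * F (k + 1) * ∏ j ∈ Ioc (k + 1) m, F j := by
    have hIcc (a : ℕ) : Icc 1 a = Ioc 0 a := Icc_add_one_left_eq_Ioc 0 a
    rw [hIcc, ← prod_Ioc_consecutive _ (Nat.zero_le (k + 1)) hkm,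
      prod_Ioc_succ_top (Nat.zero_le k), hIcc]
  have hρ : 0 < r (k + 1) := zero_lt_one.trans_le (one_le_of_doubling hr1 hr (by omega))
  have hF (j : ℕ) (hj : 1 ≤ j) : 0 ≤ F j := by
    have : 0 < r j := zero_lt_one.trans_le (one_le_of_doubling hr1 hr hj)
    positivity
  have hmiddle : F (k + 1) = 2 := by
    simp only [F, div_self hρ.ne', one_pow]
    norm_num
  calc ‖∏ j ∈ Icc 1 m, (1 + (z / r j) ^ n j)‖ ≤ ∏ j ∈ Icc 1 m, F j := by
        simpa only [hz] using norm_prod_one_add_div_pow_le (Icc 1 m) z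
          (fun j hj ↦ zero_le_one.trans (one_le_of_doubling hr1 hr (mem_Icc.1 hj).1)) n
    _ ≤ 2 ^ k * r (k + 1) ^ (∑ j ∈ Icc 1 k, n j) * 2 * 3 := by
        rw [hsplit, hmiddle]
        gcongr ?_ * _ * ?_
        · exact prod_nonneg fun j hj ↦ hF j (by linarith [(mem_Ioc.1 hj).1])
        · exact prod_Icc_one_add_div_pow_le hr1 hr (Nat.le_add_right k 1)
        · exact (prod_Ioc_one_add_div_pow_lt_three hr1 hr hn (i := k + 1) (by omega) m).le
    _ = 3 * 2 ^ (k + 1) * r (k + 1) ^ ∑ j ∈ Icc 1 k, n j := by ring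

end Product

theorem three_mul_two_pow_succ_le_pow {ρ : ℝ} {k N : ℕ} (hk : 1 ≤ k) (hρ : 2 ^ k ≤ ρ)
    (hN : 16 ≤ N) : 3 * 2 ^ (k + 1) ≤ ρ ^ N :=
  calc (3 : ℝ) * 2 ^ (k + 1) ≤ 2 ^ (k + 3) := by
        have : (0 : ℝ) < 2 ^ k := by positivity
        rw [pow_succ, pow_add]
        linarith
    _ ≤ 2 ^ (k * 16) := pow_le_pow_right₀ one_le_two (by omega)
    _ = (2 ^ k) ^ 16 := pow_mul 2 k 16
    _ ≤ ρ ^ 16 := by gcongr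
    _ ≤ ρ ^ N := pow_le_pow_right₀ ((one_le_pow₀ one_le_two).trans hρ) hN

theorem sixteen_le_of_growth {r : ℕ → ℝ} {n : ℕ → ℕ} (hr1 : 1 ≤ r 1)
    (hr : ∀ k, 2 ≤ k → 2 * r (k - 1) ≤ r k) (hn : ∀ k, 1 ≤ k → 1 ≤ n k)
    (hnr : ∀ k, 2 ≤ k → r k ^ (4 * n (k - 1)) ≤ (n k : ℝ)) {k : ℕ} (hk : 2 ≤ k) :
    16 ≤ n k := by
  have hrk : 2 ≤ r k :=
    calc (2 : ℝ) = 2 ^ 1 := (pow_one 2).symm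
      _ ≤ 2 ^ (k - 1) := pow_le_pow_right₀ one_le_two (by omega)
      _ ≤ r k := two_pow_le_of_doubling hr1 hr (by omega)
  have : (16 : ℝ) ≤ n k :=
    calc (16 : ℝ) = 2 ^ 4 := by norm_num
      _ ≤ 2 ^ (4 * n (k - 1)) :=
          pow_le_pow_right₀ one_le_two (by linarith [hn (k - 1) (by omega)])
      _ ≤ r k ^ (4 * n (k - 1)) := by gcongr
      _ ≤ n k := hnr k hk
  exact_mod_cast this

theorem sum_Icc_le_two_mul {n : ℕ → ℕ} (hnsum : ∀ k, 2 ≤ k → ∑ j ∈ Icc 1 (k - 1), n j ≤ n k)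
    {k : ℕ} (hk : 2 ≤ k) : ∑ j ∈ Icc 1 k, n j ≤ 2 * n k := by
  obtain ⟨k, rfl⟩ : ∃ k', k = k' + 1 := ⟨k - 1, by omega⟩
  have := hnsum (k + 1) hk
  rw [sum_Icc_succ_top (by omega)]
  simp only [Nat.add_sub_cancel] at this
  omega

theorem newton_displacement_lower_bound_general
    (r : ℕ → ℝ) (n : ℕ → ℕ) (h : ℂ → ℂ)
    (hnpos : ∀ k, 1 ≤ k → 1 ≤ n k)
    (hr1 : 1 ≤ r 1)
    (hr : ∀ k, 2 ≤ k → 2 * r (k - 1) ≤ r k)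
    (hnsum : ∀ k, 2 ≤ k → ∑ j ∈ Finset.Icc 1 (k - 1), n j ≤ n k)
    (hnr : ∀ k, 2 ≤ k → r k ^ (4 * n (k - 1)) ≤ (n k : ℝ))
    (hh : ∀ z : ℂ, Tendsto
      (fun m : ℕ => ∏ k ∈ Finset.Icc 1 m, (1 + (z / (r k : ℂ)) ^ (n k)))
      atTop (nhds (h z))) :
    ∀ k, 3 ≤ k → ∀ z : ℂ, ‖z‖ = r k →
      ‖h z‖ * r k ^ (n (k - 1)) ≤ (n k : ℝ) ∧
      (h z ≠ 0 →
        r k ^ (n (k - 1)) / (4 * Real.pi)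
          ≤ (1 / ‖h z‖) * ((n k : ℝ) / (4 * Real.pi))) := by
  intro k hk z hz
  obtain ⟨k, rfl⟩ : ∃ k', k = k' + 1 := ⟨k - 1, by omega⟩
  simp only [Nat.add_sub_cancel]
  have hρ : 1 ≤ r (k + 1) := one_le_of_doubling hr1 hr (by omega)
  have hbound : ‖h z‖ ≤ 3 * 2 ^ (k + 1) * r (k + 1) ^ (2 * n k) :=
    le_of_tendsto (hh z).norm <| eventually_atTop.2 ⟨k + 1, fun m hm ↦
      (norm_prod_Icc_one_add_div_pow_le hr1 hr hnpos hm hz).trans <| by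
        gcongr
        exact sum_Icc_le_two_mul hnsum (by omega)⟩
  have hconst : 3 * 2 ^ (k + 1) ≤ r (k + 1) ^ n k :=
    three_mul_two_pow_succ_le_pow (by omega)
      (two_pow_le_of_doubling hr1 hr (j := k + 1) (by omega))
      (sixteen_le_of_growth hr1 hr hnpos hnr (by omega))
  have hmain : ‖h z‖ * r (k + 1) ^ n k ≤ n (k + 1) :=
    calc ‖h z‖ * r (k + 1) ^ n k
        ≤ r (k + 1) ^ n k * r (k + 1) ^ (2 * n k) * r (k + 1) ^ n k := by
          gcongr
          exact hbound.trans (by gcongr)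
      _ = r (k + 1) ^ (4 * n k) := by ring
      _ ≤ n (k + 1) := hnr (k + 1) (by omega)
  refine ⟨hmain, fun hne ↦ ?_⟩
  have hquot : r (k + 1) ^ n k ≤ n (k + 1) / ‖h z‖ := by
    rw [le_div_iff₀ (norm_pos_iff.2 hne), mul_comm]
    exact hmain
  calc r (k + 1) ^ n k / (4 * Real.pi) ≤ n (k + 1) / ‖h z‖ / (4 * Real.pi) := by gcongr
    _ = 1 / ‖h z‖ * (n (k + 1) / (4 * Real.pi)) := by ring

/-- Under conditions (2), for every `k ≥ 3` and every `z` with `|z| = r_k` one has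
`|h(z)| · r_k^{n_{k-1}} ≤ n_k`; in particular, if `h(z) ≠ 0`, then the displacement
of the Newton map satisfies `(1/|h(z)|) · (n_k/(4π)) ≥ r_k^{n_{k-1}}/(4π)`. -/
theorem newton_displacement_lower_bound
    (r : ℕ → ℝ) (n : ℕ → ℕ) (h : ℂ → ℂ)
    (hrpos : ∀ k, 1 ≤ k → 0 < r k)
    (hnpos : ∀ k, 1 ≤ k → 1 ≤ n k)
    (hr1 : 1 ≤ r 1)
    (hr : ∀ k, 2 ≤ k → 2 * r (k - 1) ≤ r k)
    (hnsum : ∀ k, 2 ≤ k → ∑ j ∈ Finset.Icc 1 (k - 1), n j ≤ n k)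
    (hnr : ∀ k, 2 ≤ k → r k ^ (4 * n (k - 1)) ≤ (n k : ℝ))
    (hh : ∀ z : ℂ, Tendsto
      (fun m : ℕ => ∏ k ∈ Finset.Icc 1 m, (1 + (z / (r k : ℂ)) ^ (n k)))
      atTop (nhds (h z))) :
    ∀ k, 3 ≤ k → ∀ z : ℂ, ‖z‖ = r k →
      ‖h z‖ * r k ^ (n (k - 1)) ≤ (n k : ℝ) ∧
      (h z ≠ 0 →
        r k ^ (n (k - 1)) / (4 * Real.pi)
          ≤ (1 / ‖h z‖) * ((n k : ℝ) / (4 * Real.pi))) :=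
  newton_displacement_lower_bound_general r n h hnpos hr1 hr hnsum hnr hh
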